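/- The map Φ: L^ℓ(a−1,b) → L^ℓ(a,b), given by regarding a polynomial in y_1,...,y_{a+b−1} as a polynomial in y_1,...,y_{a+b}, is well-defined (maps generators R(U) to elements of L^ℓ(a,b)) and injective, provided ℓ > a−b ≥ 0. -/

import Mathlib

open MvPolynomial Finset

noncomputable section

/-- `R` of a block `{u_1 < u_2 < … < u_r}`:
`(y_{u_1} - y_{u_2})(y_{u_3} - y_{u_4}) ⋯ (y_{u_{2⌊r/2⌋-1}} - y_{u_{2⌊r/2⌋}})`. -/
def Rblock (B : Finset ℕ) : MvPolynomial ℕ ℂ :=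
  ∏ i ∈ Finset.range (B.card / 2),
    (X ((B.sort (· ≤ ·)).getD (2 * i) 0) - X ((B.sort (· ≤ ·)).getD (2 * i + 1) 0))

/-- `R(U)`: the product of the `R`-polynomials of the blocks of `U`. -/
def RU {l : ℕ} (U : Fin l → Finset ℕ) : MvPolynomial ℕ ℂ :=
  ∏ j, Rblock (U j)

/-- `L^ℓ(a,b)`: the span of the polynomials `R(U)` over all partitionings `U` of
`{1,…,a+b}` (0-based: `{0,…,a+b-1}`) into `ℓ` possibly-empty blocks with exactly
`a - b` blocks of odd cardinality. -/
def Lspace (l a b : ℕ) : Submodule ℂ (MvPolynomial ℕ ℂ) :=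
  Submodule.span ℂ
    {p | ∃ U : Fin l → Finset ℕ,
      (∀ i j, i ≠ j → Disjoint (U i) (U j)) ∧
      Finset.univ.biUnion U = Finset.range (a + b) ∧
      (Finset.univ.filter fun j => Odd (U j).card).card = a - b ∧
      p = RU U}

/-! Since at most `a - b - 1 < ℓ` blocks of a partitioning for `L^ℓ(a-1,b)` are odd, some block
is even. Adding the new largest element `a + b - 1` to it makes one more odd block and does not
change `R(U)`, because that element stays unpaired at the end of the block. The number of odd
blocks has the parity of `a + b - 1`, which rules out `a = b`. -/

open List in
theorem Finset.sort_insert_of_forall_lt {α : Type*} [LinearOrder α] {x : α} {s : Finset α}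
    (h : ∀ b ∈ s, b < x) : (insert x s).sort (· ≤ ·) = s.sort (· ≤ ·) ++ [x] := by
  have hx : x ∉ s := fun hx => (h x hx).false
  have hperm : ((insert x s).sort (· ≤ ·)).Perm (s.sort (· ≤ ·) ++ [x]) :=
    calc (insert x s).sort (· ≤ ·) ~ (insert x s).toList := sort_perm_toList _ _
      _ ~ x :: s.toList := toList_insert hx
      _ ~ x :: s.sort (· ≤ ·) := .cons x (sort_perm_toList _ _).symm
      _ ~ s.sort (· ≤ ·) ++ [x] := (List.perm_append_singleton _ _).symm
  refine hperm.eq_of_pairwise' (pairwise_sort _ _) ?_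
  refine List.pairwise_append.mpr ⟨pairwise_sort _ _, List.pairwise_singleton _ x, ?_⟩
  intro b hb y hy
  rw [List.mem_singleton.mp hy]
  exact (h b (mem_sort _ |>.mp hb)).le

theorem Rblock_insert_of_forall_lt {x : ℕ} {s : Finset ℕ} (h : ∀ b ∈ s, b < x)
    (hs : Even #s) : Rblock (insert x s) = Rblock s := by
  have hcard : #(insert x s) = #s + 1 := card_insert_of_notMem fun hx => (h x hx).false
  have hlen : (s.sort (· ≤ ·)).length = #s := length_sort _
  obtain ⟨k, hk⟩ := hs
  rw [Rblock, Rblock, hcard, show (#s + 1) / 2 = #s / 2 by omega]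
  refine prod_congr rfl fun i hi => ?_
  rw [mem_range] at hi
  rw [sort_insert_of_forall_lt h, List.getD_append _ _ _ _ (by omega),
    List.getD_append _ _ _ _ (by omega)]

theorem exists_even_of_card_filter_odd_lt_card {ι : Type*} [Fintype ι] (f : ι → ℕ)
    (h : #{i | Odd (f i)} < Fintype.card ι) : ∃ i, Even (f i) := by
  obtain ⟨i, -, hi⟩ := exists_mem_notMem_of_card_lt_card (t := univ) h
  exact ⟨i, by simpa using hi⟩

section Extension

variable {l : ℕ} (U : Fin l → Finset ℕ)

theorem RU_update_insert {x : ℕ} {j : Fin l} (hx : ∀ b ∈ U j, b < x) (hj : Even #(U j)) :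
    RU (Function.update U j (insert x (U j))) = RU U := by
  rw [RU, RU, ← Function.comp_def Rblock, Function.comp_update,
    Rblock_insert_of_forall_lt hx hj]
  exact congrArg _ (Function.update_eq_self j (Rblock ∘ U))

theorem disjoint_update_insert {x : ℕ} (j : Fin l)
    (hdisj : ∀ i k, i ≠ k → Disjoint (U i) (U k)) (hx : ∀ i, x ∉ U i) :
    ∀ i k, i ≠ k → Disjoint (Function.update U j (insert x (U j)) i)
      (Function.update U j (insert x (U j)) k) := by
  intro i k hik
  simp only [Function.update_apply]
  split_ifs with hi hk hk
  · exact absurd (hi.trans hk.symm) hik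
  · subst hi; exact disjoint_insert_left.mpr ⟨hx k, hdisj i k hik⟩
  · subst hk; exact disjoint_insert_right.mpr ⟨hx i, hdisj i k hik⟩
  · exact hdisj i k hik

theorem biUnion_update_insert (x : ℕ) (j : Fin l) :
    univ.biUnion (Function.update U j (insert x (U j))) = insert x (univ.biUnion U) := by
  ext y
  simp only [mem_biUnion, mem_univ, true_and, mem_insert, Function.update_apply]
  constructor
  · rintro ⟨i, hi⟩
    split_ifs at hi with h
    · subst h; exact (mem_insert.mp hi).imp_right (⟨i, ·⟩)
    · exact .inr ⟨i, hi⟩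
  · rintro (rfl | ⟨i, hi⟩)
    · exact ⟨j, by simp⟩
    · exact ⟨i, by split_ifs with h <;> [exact mem_insert_of_mem (h ▸ hi); exact hi]⟩

theorem card_filter_odd_update_insert {x : ℕ} {j : Fin l} (hxj : x ∉ U j) (hj : Even #(U j)) :
    #{i | Odd #(Function.update U j (insert x (U j)) i)} = #{i | Odd #(U i)} + 1 := by
  have hfilter : univ.filter (fun i => Odd #(Function.update U j (insert x (U j)) i)) =
      insert j (univ.filter fun i => Odd #(U i)) := by
    ext i
    rcases eq_or_ne i j with rfl | hi
    · simp [card_insert_of_notMem hxj, hj]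
    · simp [hi]
  rw [hfilter, card_insert_of_notMem (by simpa using hj)]

theorem odd_card_filter_odd_iff {n : ℕ} (hdisj : ∀ i k, i ≠ k → Disjoint (U i) (U k))
    (hcover : univ.biUnion U = range n) : Odd #{i | Odd #(U i)} ↔ Odd n := by
  rw [← odd_sum_iff_odd_card_odd, ← card_biUnion fun i _ k _ hik => hdisj i k hik, hcover,
    card_range]

theorem exists_RU_eq_of_card_filter_odd_lt {n : ℕ}
    (hdisj : ∀ i k, i ≠ k → Disjoint (U i) (U k)) (hcover : univ.biUnion U = range n)
    (hl : #{i | Odd #(U i)} < l) :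
    ∃ U' : Fin l → Finset ℕ, (∀ i k, i ≠ k → Disjoint (U' i) (U' k)) ∧
      univ.biUnion U' = range (n + 1) ∧ #{i | Odd #(U' i)} = #{i | Odd #(U i)} + 1 ∧
      RU U' = RU U := by
  obtain ⟨j, hj⟩ := exists_even_of_card_filter_odd_lt_card (fun i => #(U i)) (by simpa using hl)
  have hlt : ∀ i, ∀ b ∈ U i, b < n := fun i b hb =>
    mem_range.mp (hcover ▸ mem_biUnion.mpr ⟨i, mem_univ i, hb⟩)
  refine ⟨Function.update U j (insert n (U j)),
    disjoint_update_insert U j hdisj fun i hn => (hlt i n hn).false, ?_,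
    card_filter_odd_update_insert U (fun hn => (hlt j n hn).false) hj,
    RU_update_insert U (hlt j) hj⟩
  rw [biUnion_update_insert, hcover, range_add_one]

end Extension

/-- The map `Φ : L^ℓ(a-1,b) → L^ℓ(a,b)`, regarding a polynomial in
`y_1, …, y_{a+b-1}` as a polynomial in `y_1, …, y_{a+b}`, is well defined (i.e.
`L^ℓ(a-1,b)` is contained in `L^ℓ(a,b)` as subspaces of the polynomial ring) and
injective (being an inclusion), provided `ℓ > a - b ≥ 0` (and `a ≥ 1`). -/
theorem Phi_welldefined_injective
    (l a b : ℕ) (ha : 1 ≤ a) (hba : b ≤ a) (hl : a - b < l) :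
    Lspace l (a - 1) b ≤ Lspace l a b ∧
      Function.Injective (fun x : Lspace l (a - 1) b => (x : MvPolynomial ℕ ℂ)) := by
  refine ⟨Submodule.span_le.mpr ?_, Subtype.val_injective⟩
  rintro _ ⟨U, hdisj, hcover, hodd, rfl⟩
  have hlt : b < a := by
    by_contra! hab
    have hn : Odd (a - 1 + b) := ⟨b - 1, by omega⟩
    rw [← odd_card_filter_odd_iff U hdisj hcover, hodd, show a - 1 - b = 0 by omega] at hn
    exact Nat.not_odd_zero hn
  obtain ⟨U', hdisj', hcover', hodd', hRU⟩ :=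
    exists_RU_eq_of_card_filter_odd_lt U hdisj hcover (by omega)
  refine Submodule.subset_span ⟨U', hdisj', ?_, by omega, hRU.symm⟩
  rw [hcover', show a - 1 + b + 1 = a + b by omega]
end
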